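/- arXiv:1210.4675 — 12 statements merged into one kernel-verified Lean document; each statement's English description precedes it below -/
import Mathlib

section
/- Let e be a semicentral idempotent in a ring B, set S = eBe, M = eB(1-e), B̄ = (1-e)B(1-e). For any m ∈ M, the element e + m is an idempotent of B, and the map v ↦ v + v*m is a ring isomorphism from S onto (e+m)B(e+m). -/
def IsSemicentral {A : Type*} [Ring A] (e : A) : Prop :=
  e * e = e ∧ ∀ a : A, (1 - e) * a * e = 0

theorem stmt_3 {B : Type*} [Ring B] (e m : B) (he : IsSemicentral e)
    (hm : ∃ b : B, m = e * b * (1 - e)) :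
    (e + m) * (e + m) = e + m ∧
    Set.BijOn (fun v => v + v * m) {x : B | ∃ b : B, x = e * b * e}
      {y : B | ∃ b : B, y = (e + m) * b * (e + m)} ∧
    (∀ v w : B, (∃ b : B, v = e * b * e) → (∃ b : B, w = e * b * e) →
      (v + v * m) * (w + w * m) = v * w + (v * w) * m) ∧
    (∀ v w : B, (v + w) + (v + w) * m = (v + v * m) + (w + w * m)) ∧
    e + e * m = e + m := by
  obtain ⟨hee, hsc⟩ := he
  obtain ⟨b₀, hb⟩ := hm
  have hem : e * m = m := by
    rw [hb, ← mul_assoc, ← mul_assoc, hee]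
  have hme : m * e = 0 := by
    rw [hb, mul_assoc, mul_assoc, sub_mul, one_mul, hee, sub_self, mul_zero, mul_zero]
  have hmae : ∀ a : B, m * (a * e) = 0 := by
    intro a
    rw [hb, mul_assoc, mul_assoc, ← mul_assoc (1 - e) a e, hsc a, mul_zero, mul_zero]
  have hmm : m * m = 0 := by
    nth_rewrite 2 [hb]
    rw [← mul_assoc, ← mul_assoc m e b₀, hme, zero_mul, zero_mul]
  have hS : ∀ v : B, (∃ b : B, v = e * b * e) → e * v = v ∧ v * e = v ∧ m * v = 0 := by
    rintro v ⟨b, rfl⟩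
    refine ⟨by rw [← mul_assoc, ← mul_assoc, hee], by rw [mul_assoc, hee], hmae (e * b)⟩
  have h1' : e * (e + m) = e + m := by rw [mul_add, hee, hem]
  have h2' : (e + m) * e = e := by rw [add_mul, hee, hme, add_zero]
  have hidem : (e + m) * (e + m) = e + m := by
    rw [mul_add, h2', add_mul, hem, hmm, add_zero]
  refine ⟨hidem, ⟨?_, ?_, ?_⟩, ?_, ?_, ?_⟩
  · -- MapsTo
    rintro x ⟨b, rfl⟩
    obtain ⟨h1, h2, h3⟩ := hS _ ⟨b, rfl⟩
    refine ⟨e * b * e, ?_⟩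
    calc e * b * e + e * b * e * m
        = (e * b * e) * (e + m) := by rw [mul_add, h2]
      _ = (e + m) * (e * b * e) * (e + m) := by rw [add_mul, h3, add_zero, h1]
  · -- InjOn
    rintro x hx y hy hxy
    obtain ⟨-, hx2, -⟩ := hS x hx
    obtain ⟨-, hy2, -⟩ := hS y hy
    have hxy' : x + x * m = y + y * m := hxy
    have : (x + x * m) * e = (y + y * m) * e := by rw [hxy']
    rwa [add_mul, add_mul, mul_assoc x m e, mul_assoc y m e, hme, mul_zero, mul_zero,
      add_zero, add_zero, hx2, hy2] at this
  · -- SurjOn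
    rintro y ⟨b, rfl⟩
    refine ⟨(e + m) * b * e, ⟨(e + m) * b, by rw [← mul_assoc, h1']⟩, ?_⟩
    obtain ⟨-, h2, -⟩ := hS ((e + m) * b * e) ⟨(e + m) * b, by rw [← mul_assoc, h1']⟩
    show (e + m) * b * e + (e + m) * b * e * m = (e + m) * b * (e + m)
    calc (e + m) * b * e + (e + m) * b * e * m
        = ((e + m) * b * e) * (e + m) := by rw [mul_add, h2]
      _ = (e + m) * b * (e * (e + m)) := by rw [mul_assoc ((e+m)*b) e (e+m)]
      _ = (e + m) * b * (e + m) := by rw [h1']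
  · -- multiplicativity
    intro v w hv hw
    obtain ⟨-, -, hmw⟩ := hS w hw
    have z1 : v * m * w = 0 := by rw [mul_assoc, hmw, mul_zero]
    have z2 : v * m * (w * m) = 0 := by
      rw [mul_assoc, ← mul_assoc m w m, hmw, zero_mul, mul_zero]
    rw [add_mul, mul_add, mul_add, z1, z2, add_zero, add_zero, ← mul_assoc v w m]
  · intro v w; noncomm_ring
  · rw [hem]
end

section
/- Let e be a semicentral idempotent in a ring B, M = eB(1-e), and m ∈ M. Then 1 - e - m is an idempotent, and the map w ↦ w - m*w is a ring isomorphism from (1-e)B(1-e) onto (1-e-m)B(1-e-m). -/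
theorem stmt_4 {B : Type*} [Ring B] (e m : B) (he : IsSemicentral e)
    (hm : ∃ b : B, m = e * b * (1 - e)) :
    (1 - e - m) * (1 - e - m) = 1 - e - m ∧
    Set.BijOn (fun w => w - m * w) {x : B | ∃ b : B, x = (1 - e) * b * (1 - e)}
      {y : B | ∃ b : B, y = (1 - e - m) * b * (1 - e - m)} ∧
    (∀ w w' : B, (∃ b : B, w = (1 - e) * b * (1 - e)) →
      (∃ b : B, w' = (1 - e) * b * (1 - e)) →
      (w - m * w) * (w' - m * w') = w * w' - m * (w * w')) ∧
    (∀ w w' : B, (w + w') - m * (w + w') = (w - m * w) + (w' - m * w')) ∧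
    (1 - e) - m * (1 - e) = 1 - e - m := by
  obtain ⟨he1, he2⟩ := he
  obtain ⟨c, hmc⟩ := hm
  have h1e : (1 - e) * e = 0 := by simpa using he2 1
  have hme : m * e = 0 := by rw [hmc, mul_assoc, h1e, mul_zero]
  have hem : e * m = m := by rw [hmc, ← mul_assoc, ← mul_assoc, he1]
  have hmm : m * m = 0 := by
    rw [hmc, mul_assoc, ← mul_assoc (1 - e) (e * c), ← mul_assoc (1 - e) e c,
      h1e, zero_mul, zero_mul, mul_zero]
  have he1r : ∀ x : B, e * (e * x) = e * x := fun x => by rw [← mul_assoc, he1]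
  have hemr : ∀ x : B, e * (m * x) = m * x := fun x => by rw [← mul_assoc, hem]
  have hmer : ∀ x : B, m * (e * x) = 0 := fun x => by
    rw [← mul_assoc, hme, zero_mul]
  have hmmr : ∀ x : B, m * (m * x) = 0 := fun x => by
    rw [← mul_assoc, hmm, zero_mul]
  have key : ∀ b : B,
      (1 - e) * ((1 - e) * b * (1 - e) - m * ((1 - e) * b * (1 - e))) =
        (1 - e) * b * (1 - e) := by
    intro b
    simp only [mul_sub, sub_mul, mul_one, one_mul, mul_assoc, he1, hem, hme,
      hmm, he1r, hemr, hmer, hmmr, mul_zero, zero_mul, sub_zero]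
    abel
  refine ⟨?_, ⟨?_, ?_, ?_⟩, ?_, ?_, ?_⟩
  · simp only [mul_sub, sub_mul, mul_one, one_mul, he1, hem, hme, hmm]
    abel
  · -- MapsTo
    rintro x ⟨b, rfl⟩
    refine ⟨(1 - e) * b * (1 - e), ?_⟩
    show (1 - e) * b * (1 - e) - m * ((1 - e) * b * (1 - e)) =
      (1 - e - m) * ((1 - e) * b * (1 - e)) * (1 - e - m)
    simp only [mul_sub, sub_mul, mul_one, one_mul, mul_assoc, he1, hem, hme,
      hmm, he1r, hemr, hmer, hmmr, mul_zero, zero_mul, sub_zero]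
    abel
  · -- InjOn
    rintro x ⟨b, rfl⟩ x' ⟨b', rfl⟩ h
    have h' := congrArg (fun z => (1 - e) * z) h
    simp only at h'
    rw [key b, key b'] at h'
    exact h'
  · -- SurjOn
    rintro y ⟨b, rfl⟩
    refine ⟨(1 - e) * b * (1 - e - m), ⟨b - b * m, ?_⟩, ?_⟩
    · simp only [mul_sub, sub_mul, mul_one, one_mul, mul_assoc, he1, hem, hme,
        hmm, he1r, hemr, hmer, hmmr, mul_zero, zero_mul, sub_zero]
      abel
    · show (1 - e) * b * (1 - e - m) - m * ((1 - e) * b * (1 - e - m)) =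
        (1 - e - m) * b * (1 - e - m)
      simp only [mul_sub, sub_mul, mul_one, one_mul, mul_assoc, he1, hem, hme,
        hmm, he1r, hemr, hmer, hmmr, mul_zero, zero_mul, sub_zero]
      abel
  · -- multiplicative
    rintro w w' ⟨b, rfl⟩ ⟨b', rfl⟩
    simp only [mul_sub, sub_mul, mul_one, one_mul, mul_assoc, he1, hem, hme,
      hmm, he1r, hemr, hmer, hmmr, mul_zero, zero_mul, sub_zero]
    abel
  · intro w w'
    rw [mul_add]; abel
  · rw [mul_sub, mul_one, hme, sub_zero]
end

section
/- Let f be an idempotent in a ring B and f₁ a semicentral idempotent of B. Write α = f₁*f*f₁, μ = f₁*f*(1-f₁), β = (1-f₁)*f*(1-f₁), so that f = α + μ + β (using semicentrality of f₁). Set s = α + α*μ and b = μ*β + β. Then s and b are orthogonal idempotents with s + b = f, and f*s = s = s*f and f*b = b = b*f. -/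
/-- The corner ring `fAf` is semicentral reduced: its only semicentral idempotents are `0` and `f`. -/
def CornerSemicentralReduced {A : Type*} [Ring A] (f : A) : Prop :=
  ∀ x : A, x * x = x → f * x * f = x →
    (∀ b : A, (f - x) * (f * b * f) * x = 0) → x = 0 ∨ x = f

theorem stmt_7 {B : Type*} [Ring B] (f₁ f : B)
    (hf₁ : IsSemicentral f₁) (hf : f * f = f) :
    ∀ α μ β s b : B,
      α = f₁ * f * f₁ → μ = f₁ * f * (1 - f₁) → β = (1 - f₁) * f * (1 - f₁) →
      s = α + α * μ → b = μ * β + β →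
      f = α + μ + β ∧
      s * s = s ∧ b * b = b ∧ s * b = 0 ∧ b * s = 0 ∧ s + b = f ∧
      f * s = s ∧ s * f = s ∧ f * b = b ∧ b * f = b := by
  intro α μ β s b hα hμ hβ hs hb
  subst hα hμ hβ hs hb
  obtain ⟨hee, hc⟩ := hf₁
  have hee' : ∀ x : B, f₁ * (f₁ * x) = f₁ * x := fun x => by rw [← mul_assoc, hee]
  have hff' : ∀ x : B, f * (f * x) = f * x := fun x => by rw [← mul_assoc, hf]
  have hfe : f₁ * (f * f₁) = f * f₁ := by
    have := hc f
    rw [sub_mul, one_mul, sub_mul, sub_eq_zero] at this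
    rw [← mul_assoc]; exact this.symm
  have hfe' : ∀ x : B, f₁ * (f * (f₁ * x)) = f * (f₁ * x) := fun x => by
    rw [← mul_assoc, ← mul_assoc, ← mul_assoc f, mul_assoc f₁, hfe]
  refine ⟨?_, ?_, ?_, ?_, ?_, ?_, ?_, ?_, ?_, ?_⟩ <;>
    simp only [mul_sub, sub_mul, mul_one, one_mul, mul_add, add_mul, mul_assoc,
      hee, hee', hf, hff', hfe, hfe'] <;> abel
end

section
/- Let f₁ be a semicentral idempotent in a ring B, and let f ∈ B be a semicentral reduced idempotent of B (f is semicentral in B and fBf is semicentral reduced). With α = f₁*f*f₁, μ = f₁*f*(1-f₁), β = (1-f₁)*f*(1-f₁), either f = α + α*μ (so β = 0) or f = μ*β + β (so α = 0). -/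
lemma key_aux {B : Type*} [Ring B] (e a : B) (h : (1 - e) * a * e = 0) :
    a * e = e * (a * e) := by
  have h2 : a * e - e * (a * e) = 0 := by rw [← h]; noncomm_ring
  exact sub_eq_zero.mp h2

theorem stmt_8 {B : Type*} [Ring B] (f₁ f : B)
    (hf₁ : IsSemicentral f₁)
    (hf : IsSemicentral f) (hfred : CornerSemicentralReduced f) :
    ∀ α μ β : B,
      α = f₁ * f * f₁ → μ = f₁ * f * (1 - f₁) → β = (1 - f₁) * f * (1 - f₁) →
      (f = α + α * μ ∧ β = 0) ∨ (f = μ * β + β ∧ α = 0) := by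
  intro α μ β hα hμ hβ
  obtain ⟨m1, hfs⟩ := hf
  obtain ⟨m2, hf1s⟩ := hf₁
  have K1 : ∀ a : B, a * f₁ = f₁ * (a * f₁) := fun a => key_aux f₁ a (hf1s a)
  have K : ∀ a : B, a * f = f * (a * f) := fun a => key_aux f a (hfs a)
  have hA : f * f₁ = f₁ * (f * f₁) := K1 f
  have hB : f₁ * f = f * (f₁ * f) := K f₁
  -- derived word rules (right-associated)
  have m1' : ∀ y : B, f * (f * y) = f * y := fun y => by rw [← mul_assoc, m1]
  have m2' : ∀ y : B, f₁ * (f₁ * y) = f₁ * y := fun y => by rw [← mul_assoc, m2]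
  have w1 : f₁ * (f * f₁) = f * f₁ := hA.symm
  have w1' : ∀ y : B, f₁ * (f * (f₁ * y)) = f * (f₁ * y) := fun y => by
    rw [← mul_assoc f f₁ y, ← mul_assoc, w1, mul_assoc]
  have w2 : f * (f₁ * f) = f₁ * f := hB.symm
  have w2' : ∀ y : B, f * (f₁ * (f * y)) = f₁ * (f * y) := fun y => by
    rw [← mul_assoc f₁ f y, ← mul_assoc, w2, mul_assoc]
  have hx1 : (f * (f₁ * f)) * (f * (f₁ * f)) = f * (f₁ * f) := by
    simp only [mul_assoc, m1, m2, m1', m2', w1, w1', w2, w2']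
  have hx2 : f * (f * (f₁ * f)) * f = f * (f₁ * f) := by
    simp only [mul_assoc, m1, m2, m1', m2', w1, w1', w2, w2']
  have hx3 : ∀ b : B, (f - f * (f₁ * f)) * (f * b * f) * (f * (f₁ * f)) = 0 := by
    intro b
    have h := K1 (f * b)
    have e1 : f * (b * (f₁ * f)) = f₁ * (f * b * f₁) * f := by
      rw [← h]; noncomm_ring
    have goal' : f * (b * (f₁ * f)) = f₁ * (f * (b * (f₁ * f))) := by
      rw [e1]
      simp only [← mul_assoc, m2]
    simp only [sub_mul, mul_sub, mul_assoc, m1, m2, m1', m2', w1, w1', w2, w2']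
    rw [← goal', sub_self]
  rcases hfred (f * (f₁ * f)) hx1 hx2 hx3 with h0 | hEq
  · -- x = 0 : f₁*f = 0, f*f₁ = 0
    right
    have h1f : f₁ * f = 0 := by rw [hB, h0]
    have hf1 : f * f₁ = 0 := by rw [hA, ← mul_assoc, h1f, zero_mul]
    have h1f' : ∀ y : B, f₁ * (f * y) = 0 := fun y => by
      rw [← mul_assoc, h1f, zero_mul]
    have hf1' : ∀ y : B, f * (f₁ * y) = 0 := fun y => by
      rw [← mul_assoc, hf1, zero_mul]
    constructor
    · rw [hμ, hβ]
      simp only [mul_sub, sub_mul, mul_one, one_mul, mul_assoc, m1, m2, m1', m2',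
        h1f, hf1, h1f', hf1', zero_mul, mul_zero, sub_zero, zero_sub, zero_add, add_zero]
    · rw [hα, h1f, zero_mul]
  · -- x = f : f₁*f = f
    left
    have h1f : f₁ * f = f := by rw [hB, hEq]
    have h1f' : ∀ y : B, f₁ * (f * y) = f * y := fun y => by
      rw [← mul_assoc, h1f]
    constructor
    · rw [hμ, hα]
      simp only [mul_sub, sub_mul, mul_one, one_mul, mul_assoc, m1, m2, m1', m2',
        w1, w1', w2, w2', h1f, h1f']
      noncomm_ring
    · rw [hβ]
      simp only [mul_sub, sub_mul, mul_one, one_mul, mul_assoc, m1, m2, m1', m2',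
        w1, w1', w2, w2', h1f, h1f']
      noncomm_ring
end

section
/- Let f₁ be a semicentral idempotent in a ring B and f a semicentral idempotent of B with f₁*f*f₁ = 0. Then β = (1-f₁)*f*(1-f₁) is a semicentral idempotent of the corner ring B₂ = (1-f₁)B(1-f₁), and βB₂β = fBf as subsets of B; in particular if fBf is semicentral reduced then so is βB₂β. -/
theorem stmt_10 {B : Type*} [Ring B] (f₁ f : B)
    (hf₁ : IsSemicentral f₁) (hf : IsSemicentral f)
    (hα : f₁ * f * f₁ = 0) :
    ∀ β : B, β = (1 - f₁) * f * (1 - f₁) →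
      β * β = β ∧
      (∀ x : B, ((1 - f₁) - β) * ((1 - f₁) * x * (1 - f₁)) * β = 0) ∧
      {y : B | ∃ b : B, y = β * b * β} = {y : B | ∃ b : B, y = f * b * f} ∧
      (CornerSemicentralReduced f → CornerSemicentralReduced β) := by
  obtain ⟨hf₁i, hf₁s⟩ := hf₁
  obtain ⟨hfi, hfs⟩ := hf
  -- f * f₁ = 0
  have h1 : f * f₁ = 0 := by
    have h := hf₁s f
    rw [sub_mul, one_mul, sub_mul, sub_eq_zero] at h
    rw [h, hα]
  -- f₁ * f = 0
  have h2 : f₁ * f = 0 := by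
    have h := hfs f₁
    rw [sub_mul, one_mul, sub_mul, sub_eq_zero] at h
    rw [h, h1, zero_mul]
  have hβf : (1 - f₁) * f * (1 - f₁) = f := by
    have : (1 - f₁) * f * (1 - f₁) = f - f₁ * f - f * f₁ + f₁ * (f * f₁) := by noncomm_ring
    rw [h1, h2, mul_zero] at this
    simpa using this
  intro β hβ
  subst hβ
  rw [hβf]
  refine ⟨hfi, ?_, rfl, fun h => h⟩
  intro x
  set y := (1 - f₁) * x * (1 - f₁) with hy
  have h3 := hfs y
  have h4 : f₁ * (y * f) = 0 := by
    have hyf : y * f = f * y * f := by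
      have h := hfs y
      rw [sub_mul, one_mul, sub_mul, sub_eq_zero] at h
      exact h
    rw [hyf, ← mul_assoc, ← mul_assoc, h2, zero_mul, zero_mul]
  have h5 : ((1 - f₁) - f) * y * f = (1 - f) * y * f - f₁ * (y * f) := by noncomm_ring
  rw [h5, h3, h4, sub_zero]
end

section
/- Let e ∈ A and f ∈ B be semicentral idempotents of rings A and B, and let φ : A → B be a ring isomorphism with φ(e) ∈ f + fB(1-f). Then: (i) the map r ↦ f*φ(r)*f restricted to eAe gives a ring isomorphism eAe → fBf; (ii) the map a ↦ (1-f)*φ(a)*(1-f) restricted to (1-e)A(1-e) gives a ring isomorphism (1-e)A(1-e) → (1-f)B(1-f); (iii) φ maps eA(1-e) bijectively onto fB(1-f). -/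
private lemma comp_mul {C : Type*} [Ring C] {u v w : C} (h : u * v = w) :
    ∀ x : C, u * (v * x) = w * x := fun x => by rw [← mul_assoc, h]

theorem stmt_11 {A B : Type*} [Ring A] [Ring B] (e : A) (f : B)
    (he : IsSemicentral e) (hf : IsSemicentral f) (φ : A ≃+* B)
    (hφe : ∃ m : B, (∃ b : B, m = f * b * (1 - f)) ∧ φ e = f + m) :
    -- (i) r ↦ f * φ(r) * f is a ring isomorphism eAe → fBf
    (Set.BijOn (fun r : A => f * φ r * f) {x : A | ∃ a : A, x = e * a * e}
        {y : B | ∃ b : B, y = f * b * f} ∧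
      (∀ r s : A, (∃ a, r = e * a * e) → (∃ a, s = e * a * e) →
        f * φ (r + s) * f = f * φ r * f + f * φ s * f ∧
        f * φ (r * s) * f = (f * φ r * f) * (f * φ s * f)) ∧
      f * φ e * f = f) ∧
    -- (ii) a ↦ (1-f) * φ(a) * (1-f) is a ring isomorphism (1-e)A(1-e) → (1-f)B(1-f)
    (Set.BijOn (fun a : A => (1 - f) * φ a * (1 - f))
        {x : A | ∃ a : A, x = (1 - e) * a * (1 - e)}
        {y : B | ∃ b : B, y = (1 - f) * b * (1 - f)} ∧
      (∀ a a' : A, (∃ x, a = (1 - e) * x * (1 - e)) → (∃ x, a' = (1 - e) * x * (1 - e)) →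
        (1 - f) * φ (a + a') * (1 - f) =
            (1 - f) * φ a * (1 - f) + (1 - f) * φ a' * (1 - f) ∧
        (1 - f) * φ (a * a') * (1 - f) =
            ((1 - f) * φ a * (1 - f)) * ((1 - f) * φ a' * (1 - f))) ∧
      (1 - f) * φ (1 - e) * (1 - f) = 1 - f) ∧
    -- (iii) φ maps eA(1-e) bijectively onto fB(1-f)
    Set.BijOn (fun a : A => φ a) {x : A | ∃ a : A, x = e * a * (1 - e)}
      {y : B | ∃ b : B, y = f * b * (1 - f)} := by
  obtain ⟨m, ⟨c, hm⟩, hfe⟩ := hφe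
  have hee : e * e = e := he.1
  have hff : f * f = f := hf.1
  -- basic idempotent identities
  have eg0 : e * (1 - e) = 0 := by rw [mul_sub, mul_one, hee, sub_self]
  have h2 : (1 - f) * f = 0 := by rw [sub_mul, one_mul, hff, sub_self]
  have h3 : f * (1 - f) = 0 := by rw [mul_sub, mul_one, hff, sub_self]
  have h4 : (1 - f) * (1 - f) = 1 - f := by rw [mul_sub, mul_one, h2, sub_zero]
  -- semicentral identities
  have hsc0 : ∀ b : B, f * b * f = b * f := by
    intro b
    have h := hf.2 b
    rw [sub_mul, one_mul, sub_mul, sub_eq_zero] at h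
    exact h.symm
  have hsc0' : ∀ b : B, f * (b * f) = b * f := fun b => by
    rw [← mul_assoc]; exact hsc0 b
  have hbh0 : ∀ b : B, (1 - f) * b * (1 - f) = (1 - f) * b := fun b => by
    rw [mul_sub, mul_one, hf.2 b, sub_zero]
  have hbh' : ∀ b : B, (1 - f) * (b * (1 - f)) = (1 - f) * b := fun b => by
    rw [← mul_assoc]; exact hbh0 b
  have hbh'' : ∀ b x : B, (1 - f) * (b * ((1 - f) * x)) = (1 - f) * (b * x) := fun b x => by
    rw [← mul_assoc, ← mul_assoc, hbh0 b, mul_assoc]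
  have hbh2 : ∀ b x : B, (1 - f) * (b * (x * (1 - f))) = (1 - f) * (b * x) := fun b x => by
    rw [← mul_assoc b x (1 - f), hbh' (b * x)]
  have hsc2 : ∀ b x : B, f * (b * (x * f)) = b * (x * f) := fun b x => by
    rw [← mul_assoc b x f, hsc0' (b * x), mul_assoc]
  have hcf' : ∀ b : B, (1 - f) * (b * f) = 0 := fun b => by
    rw [← mul_assoc]; exact hf.2 b
  -- m identities
  have mf : m * f = 0 := by rw [hm, mul_assoc, h2, mul_zero]
  have fm : f * m = m := by rw [hm, ← mul_assoc, ← mul_assoc, hff]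
  have hm0 : (1 - f) * m = 0 := by rw [hm, ← mul_assoc, ← mul_assoc, h2, zero_mul, zero_mul]
  have mh : m * (1 - f) = m := by rw [hm, mul_assoc, h4]
  have hbm0 : ∀ b : B, (1 - f) * (b * m) = 0 := fun b => by
    rw [show b * m = b * f * (c * (1 - f)) from by rw [hm]; noncomm_ring,
      ← mul_assoc, hcf' b, zero_mul]
  -- φ e identities
  have pef : φ e * f = f := by rw [hfe, add_mul, hff, mf, add_zero]
  have fpe : f * φ e = φ e := by rw [hfe, mul_add, hff, fm]
  have hpe : (1 - f) * φ e = 0 := by rw [hfe, mul_add, h2, hm0, add_zero]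
  have peh : φ e * (1 - f) = m := by rw [hfe, add_mul, h3, mh, zero_add]
  have msc : ∀ b : B, m * (b * f) = 0 := fun b => by
    rw [hm, mul_assoc, hcf' b, mul_zero]
  have pesc : ∀ b : B, φ e * (b * f) = b * f := fun b => by
    rw [hfe, add_mul, hsc0' b, msc b, add_zero]
  -- φ (1 - e) identities
  have pg : φ (1 - e) = (1 - f) - m := by
    rw [map_sub, map_one, hfe]; noncomm_ring
  have hpg : (1 - f) * φ (1 - e) = 1 - f := by rw [pg, mul_sub, h4, hm0, sub_zero]
  have pgh : φ (1 - e) * (1 - f) = φ (1 - e) := by rw [pg, sub_mul, h4, mh]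
  have pgf : φ (1 - e) * f = 0 := by rw [pg, sub_mul, h2, mf, sub_zero]
  have hbpg : ∀ b : B, (1 - f) * (b * φ (1 - e)) = (1 - f) * b := fun b => by
    rw [pg, mul_sub, mul_sub, hbh' b, hbm0 b, sub_zero]
  refine ⟨⟨⟨?_, ?_, ?_⟩, ?_, ?_⟩, ⟨⟨?_, ?_, ?_⟩, ?_, ?_⟩, ?_, ?_, ?_⟩
  · -- (i) MapsTo
    intro x _
    exact ⟨φ x, rfl⟩
  · -- (i) InjOn
    rintro r ⟨a, rfl⟩ s ⟨a', rfl⟩ hEq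
    simp only [hsc0] at hEq
    have key : ∀ a : A, φ (e * a * e) = φ (e * a * e) * f + φ (e * a * e) * f * (c * (1 - f)) := by
      intro a
      have h1 : e * a * e * e = e * a * e := by rw [mul_assoc (e*a) e e, hee]
      calc φ (e * a * e) = φ (e * a * e * e) := by rw [h1]
        _ = φ (e * a * e) * (f + m) := by rw [map_mul, hfe]
        _ = φ (e * a * e) * f + φ (e * a * e) * f * (c * (1 - f)) := by
            rw [hm]; noncomm_ring
    apply φ.injective
    rw [key a, key a', hEq]
  · -- (i) SurjOn
    rintro y ⟨b', rfl⟩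
    refine ⟨e * φ.symm (f * b' * f) * e, ⟨φ.symm (f * b' * f), rfl⟩, ?_⟩
    simp only [map_mul, RingEquiv.apply_symm_apply, mul_assoc,
      comp_mul fpe, comp_mul pef, pef, pesc, hsc0', hsc2, hff]
  · -- (i) ring hom
    intro r s _ _
    constructor
    · rw [map_add, mul_add, add_mul]
    · simp only [map_mul, mul_assoc, comp_mul hff, hsc0', hsc2]
  · -- (i) identity
    rw [fpe, pef]
  · -- (ii) MapsTo
    intro x _
    exact ⟨φ x, rfl⟩
  · -- (ii) InjOn
    rintro r ⟨x, rfl⟩ s ⟨x', rfl⟩ hEq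
    simp only [hbh0] at hEq
    have h5 : ∀ x : A, (f + m) * φ ((1 - e) * x * (1 - e)) = 0 := by
      intro x
      have hz : e * ((1 - e) * x * (1 - e)) = 0 := by
        rw [← mul_assoc, ← mul_assoc, eg0, zero_mul, zero_mul]
      rw [← hfe, ← map_mul, hz, map_zero]
    have key : ∀ x : A, φ ((1 - e) * x * (1 - e)) =
        (1 - f) * φ ((1 - e) * x * (1 - e)) -
          m * ((1 - f) * φ ((1 - e) * x * (1 - e))) := by
      intro x
      set u := φ ((1 - e) * x * (1 - e)) with hu
      have hh : u - ((1 - f) * u - m * ((1 - f) * u)) = (f + m) * u - (m * f) * u := by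
        noncomm_ring
      rw [h5 x, mf, zero_mul, sub_zero] at hh
      exact sub_eq_zero.mp hh
    apply φ.injective
    rw [key x, key x', hEq]
  · -- (ii) SurjOn
    rintro y ⟨b', rfl⟩
    refine ⟨(1 - e) * φ.symm ((1 - f) * b' * (1 - f)) * (1 - e),
      ⟨φ.symm ((1 - f) * b' * (1 - f)), rfl⟩, ?_⟩
    simp only [map_mul, RingEquiv.apply_symm_apply, mul_assoc,
      comp_mul hpg, comp_mul h4, pgh, hpg, hbpg, h4, hbh', hbh'', hbh2]
  · -- (ii) ring hom
    intro a a' _ _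
    constructor
    · rw [map_add, mul_add, add_mul]
    · simp only [map_mul, mul_assoc, comp_mul h4, hbh', hbh'', hbh2]
  · -- (ii) identity
    rw [hpg, h4]
  · -- (iii) MapsTo
    rintro x ⟨a, rfl⟩
    refine ⟨φ (e * a * (1 - e)), ?_⟩
    simp only [map_mul, mul_assoc, comp_mul fpe, pgh, comp_mul pgh]
  · -- (iii) InjOn
    intro x _ y _ hxy
    exact φ.injective hxy
  · -- (iii) SurjOn
    rintro y ⟨b', rfl⟩
    refine ⟨e * φ.symm (f * b' * (1 - f)) * (1 - e),
      ⟨φ.symm (f * b' * (1 - f)), rfl⟩, ?_⟩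
    simp only [map_mul, RingEquiv.apply_symm_apply, mul_assoc,
      comp_mul fpe, comp_mul pef, pgh, comp_mul pgh, hpg, comp_mul hpg, hsc0']
end

section
/- Let e ∈ A, f ∈ B be semicentral idempotents, φ : A → B a ring isomorphism with φ(e) = f + m where m ∈ M = fB(1-f). Define ρ : eAe → fBf and φ̄ : (1-e)A(1-e) → (1-f)B(1-f) by φ(r) = ρ(r) + ρ(r)*m for r ∈ eAe and φ(a) = φ̄(a) - m*φ̄(a) for a ∈ (1-e)A(1-e). Then for any a ∈ A, writing r = e*a*e, ℓ = e*a*(1-e), ā = (1-e)*a*(1-e), one has φ(a) = ρ(r) + (ρ(r)*m + φ(ℓ) - m*φ̄(ā)) + φ̄(ā). -/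
theorem stmt_12 {A B : Type*} [Ring A] [Ring B] (e : A) (f m : B)
    (he : IsSemicentral e) (hf : IsSemicentral f) (φ : A ≃+* B)
    (hm : ∃ b : B, m = f * b * (1 - f)) (hφe : φ e = f + m)
    (ρ φb : A → B)
    (hρc : ∀ r : A, (∃ a, r = e * a * e) → f * ρ r * f = ρ r)
    (hρ : ∀ r : A, (∃ a, r = e * a * e) → φ r = ρ r + ρ r * m)
    (hφbc : ∀ a' : A, (∃ a, a' = (1 - e) * a * (1 - e)) → (1 - f) * φb a' * (1 - f) = φb a')
    (hφb : ∀ a' : A, (∃ a, a' = (1 - e) * a * (1 - e)) → φ a' = φb a' - m * φb a') :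
    ∀ a : A,
      φ a = ρ (e * a * e) +
        (ρ (e * a * e) * m + φ (e * a * (1 - e)) - m * φb ((1 - e) * a * (1 - e))) +
        φb ((1 - e) * a * (1 - e)) := by
  intro a
  have hdec : a = e * a * e + e * a * (1 - e) + (1 - e) * a * (1 - e) := by
    have h0 : a * e = e * a * e := by
      have h := he.2 a
      have h' : a * e - e * a * e = 0 := by rw [← h]; noncomm_ring
      exact sub_eq_zero.mp h'
    rw [← h0]; noncomm_ring
  have h1 := hρ (e * a * e) ⟨a, rfl⟩
  have h2 := hφb ((1 - e) * a * (1 - e)) ⟨a, rfl⟩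
  calc φ a = φ (e * a * e) + φ (e * a * (1 - e)) + φ ((1 - e) * a * (1 - e)) := by
        rw [← map_add, ← map_add]; exact congrArg φ hdec
    _ = _ := by rw [h1, h2]; abel
end

section
/- Conversely, given rings A, B with semicentral idempotents e ∈ A and f ∈ B, a ring isomorphism ρ : eAe → fBf, a ring isomorphism φ̄ : (1-e)A(1-e) → (1-f)B(1-f), an additive bijection χ : eA(1-e) → fB(1-f) satisfying χ(r*ℓ) = ρ(r)*χ(ℓ) and χ(ℓ*a) = χ(ℓ)*φ̄(a) for r ∈ eAe, ℓ ∈ eA(1-e), a ∈ (1-e)A(1-e), and an element m ∈ fB(1-f), the map φ(a) := ρ(e*a*e) + ρ(e*a*e)*m + χ(e*a*(1-e)) - m*φ̄((1-e)*a*(1-e)) + φ̄((1-e)*a*(1-e)) is a ring isomorphism A → B with φ(e) = f + m. -/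
section Aux
variable {R : Type*} [Ring R]

private lemma reassoc4 (p q x r s : R) : p*(q*x*r)*s = (p*q)*x*(r*s) := by noncomm_ring
private lemma mid6 (p x q r y s : R) : (p*x*q)*(r*y*s) = p*x*((q*r)*(y*s)) := by noncomm_ring

private lemma idm1 {e : R} (h1 : e*e = e) : e*(1-e) = 0 := by
  rw [mul_sub, mul_one, h1, sub_self]
private lemma idm2 {e : R} (h1 : e*e = e) : (1-e)*e = 0 := by
  rw [sub_mul, one_mul, h1, sub_self]
private lemma idm3 {e : R} (h1 : e*e = e) : (1-e)*(1-e) = 1-e := by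
  rw [sub_mul, one_mul, mul_sub, mul_one, h1, sub_self, sub_zero]

private lemma scPeirce {e : R} (h2 : ∀ a, (1-e)*a*e = 0) (a : R) :
    e*a*e + e*a*(1-e) + (1-e)*a*(1-e) = a := by
  have key : e*a*e + e*a*(1-e) + (1-e)*a*(1-e) = a - (1-e)*a*e := by noncomm_ring
  rw [key, h2, sub_zero]

private lemma prodR {e : R} (h1 : e*e = e) (h2 : ∀ a, (1-e)*a*e = 0) (a a' : R) :
    (e*a*e)*(e*a'*e) = e*(a*a')*e := by
  have e1 : (e*a*e)*(e*a'*e) = e*a*((e*e)*(a'*e)) := by noncomm_ring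
  have e2 : e*(a*a')*e = e*a*(e*(a'*e)) + e*a*((1-e)*(a'*e)) := by noncomm_ring
  have h3 : (1-e)*(a'*e) = 0 := by rw [← mul_assoc]; exact h2 a'
  rw [e1, h1, e2, h3, mul_zero, add_zero]

private lemma prodL {e : R} (h1 : e*e = e) (a a' : R) :
    (e*a*e)*(e*a'*(1-e)) + (e*a*(1-e))*((1-e)*a'*(1-e)) = e*(a*a')*(1-e) := by
  have e1 : (e*a*e)*(e*a'*(1-e)) = e*a*((e*e)*(a'*(1-e))) := by noncomm_ring
  have e2 : (e*a*(1-e))*((1-e)*a'*(1-e)) = e*a*(((1-e)*(1-e))*(a'*(1-e))) := by noncomm_ring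
  rw [e1, e2, h1, idm3 h1]
  noncomm_ring

private lemma prodD {e : R} (h1 : e*e = e) (h2 : ∀ a, (1-e)*a*e = 0) (a a' : R) :
    ((1-e)*a*(1-e))*((1-e)*a'*(1-e)) = (1-e)*(a*a')*(1-e) := by
  have e1 : ((1-e)*a*(1-e))*((1-e)*a'*(1-e)) = (1-e)*a*(((1-e)*(1-e))*(a'*(1-e))) := by noncomm_ring
  have e2 : (1-e)*(a*a')*(1-e) = (1-e)*a*((1-e)*(a'*(1-e))) + ((1-e)*a*e)*(a'*(1-e)) := by
    noncomm_ring
  rw [e1, idm3 h1, e2, h2, zero_mul, add_zero]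

private lemma cornerE1 {e : R} (h1 : e*e = e) (x : R) : e*(e*x*e)*e = e*x*e := by
  rw [reassoc4, h1]
private lemma cornerE2 {e : R} (h1 : e*e = e) (x : R) : e*(e*x*(1-e))*e = 0 := by
  rw [reassoc4, idm2 h1]; simp
private lemma cornerE3 {e : R} (h1 : e*e = e) (x : R) : e*((1-e)*x*(1-e))*e = 0 := by
  rw [reassoc4, idm1 h1]; simp
private lemma cornerL1 {e : R} (h1 : e*e = e) (x : R) : e*(e*x*e)*(1-e) = 0 := by
  rw [reassoc4, idm1 h1]; simp
private lemma cornerL2 {e : R} (h1 : e*e = e) (x : R) : e*(e*x*(1-e))*(1-e) = e*x*(1-e) := by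
  rw [reassoc4, h1, idm3 h1]
private lemma cornerL3 {e : R} (h1 : e*e = e) (x : R) : e*((1-e)*x*(1-e))*(1-e) = 0 := by
  rw [reassoc4, idm1 h1]; simp
private lemma cornerD1 {e : R} (h1 : e*e = e) (x : R) : (1-e)*(e*x*e)*(1-e) = 0 := by
  rw [reassoc4, idm2 h1]; simp
private lemma cornerD2 {e : R} (h1 : e*e = e) (x : R) : (1-e)*(e*x*(1-e))*(1-e) = 0 := by
  rw [reassoc4, idm2 h1]; simp
private lemma cornerD3 {e : R} (h1 : e*e = e) (x : R) :
    (1-e)*((1-e)*x*(1-e))*(1-e) = (1-e)*x*(1-e) := by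
  rw [reassoc4, idm3 h1]

private lemma cross_z1 {e : R} (h1 : e*e = e) (p x y s : R) : (p*x*(1-e))*(e*y*s) = 0 := by
  rw [mid6, idm2 h1]; simp
private lemma cross_z2 {e : R} (h1 : e*e = e) (p x y s : R) : (p*x*e)*((1-e)*y*s) = 0 := by
  rw [mid6, idm1 h1]; simp

end Aux

theorem stmt_13 {A B : Type*} [Ring A] [Ring B] (e : A) (f m : B)
    (he : IsSemicentral e) (hf : IsSemicentral f)
    (hm : ∃ b : B, m = f * b * (1 - f))
    (ρ φb χ : A → B)
    -- ρ : eAe → fBf is a ring isomorphism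
    (hρbij : Set.BijOn ρ {x : A | ∃ a, x = e * a * e} {y : B | ∃ b, y = f * b * f})
    (hρadd : ∀ r s : A, (∃ a, r = e * a * e) → (∃ a, s = e * a * e) →
      ρ (r + s) = ρ r + ρ s)
    (hρmul : ∀ r s : A, (∃ a, r = e * a * e) → (∃ a, s = e * a * e) →
      ρ (r * s) = ρ r * ρ s)
    (hρone : ρ e = f)
    -- φb : (1-e)A(1-e) → (1-f)B(1-f) is a ring isomorphism
    (hφbbij : Set.BijOn φb {x : A | ∃ a, x = (1 - e) * a * (1 - e)}
      {y : B | ∃ b, y = (1 - f) * b * (1 - f)})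
    (hφbadd : ∀ a a' : A, (∃ x, a = (1 - e) * x * (1 - e)) →
      (∃ x, a' = (1 - e) * x * (1 - e)) → φb (a + a') = φb a + φb a')
    (hφbmul : ∀ a a' : A, (∃ x, a = (1 - e) * x * (1 - e)) →
      (∃ x, a' = (1 - e) * x * (1 - e)) → φb (a * a') = φb a * φb a')
    (hφbone : φb (1 - e) = 1 - f)
    -- χ : eA(1-e) → fB(1-f) is an additive bijection compatible with ρ and φb
    (hχbij : Set.BijOn χ {x : A | ∃ a, x = e * a * (1 - e)}
      {y : B | ∃ b, y = f * b * (1 - f)})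
    (hχadd : ∀ ℓ ℓ' : A, (∃ a, ℓ = e * a * (1 - e)) → (∃ a, ℓ' = e * a * (1 - e)) →
      χ (ℓ + ℓ') = χ ℓ + χ ℓ')
    (hχl : ∀ r ℓ : A, (∃ a, r = e * a * e) → (∃ a, ℓ = e * a * (1 - e)) →
      χ (r * ℓ) = ρ r * χ ℓ)
    (hχr : ∀ ℓ a : A, (∃ x, ℓ = e * x * (1 - e)) → (∃ x, a = (1 - e) * x * (1 - e)) →
      χ (ℓ * a) = χ ℓ * φb a) :
    ∃ φ : A ≃+* B,
      (∀ a : A, φ a = ρ (e * a * e) + ρ (e * a * e) * m + χ (e * a * (1 - e)) -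
        m * φb ((1 - e) * a * (1 - e)) + φb ((1 - e) * a * (1 - e))) ∧
      φ e = f + m := by
  obtain ⟨he1, he2⟩ := he
  obtain ⟨hf1, hf2⟩ := hf
  obtain ⟨b₀, hmeq⟩ := hm
  -- zero values
  have hρ0 : ρ 0 = 0 := by
    have h := hρadd 0 0 ⟨0, by simp⟩ ⟨0, by simp⟩
    rw [add_zero] at h
    exact (left_eq_add.mp h)
  have hχ0 : χ 0 = 0 := by
    have h := hχadd 0 0 ⟨0, by simp⟩ ⟨0, by simp⟩
    rw [add_zero] at h
    exact (left_eq_add.mp h)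
  have hφb0 : φb 0 = 0 := by
    have h := hφbadd 0 0 ⟨0, by simp⟩ ⟨0, by simp⟩
    rw [add_zero] at h
    exact (left_eq_add.mp h)
  -- shapes
  have shR : ∀ a : A, ∃ b, ρ (e*a*e) = f*b*f := fun a => hρbij.1 ⟨a, rfl⟩
  have shL : ∀ a : A, ∃ b, χ (e*a*(1-e)) = f*b*(1-f) := fun a => hχbij.1 ⟨a, rfl⟩
  have shD : ∀ a : A, ∃ b, φb ((1-e)*a*(1-e)) = (1-f)*b*(1-f) := fun a => hφbbij.1 ⟨a, rfl⟩
  -- extraction of components in B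
  have extR : ∀ a : A,
      f * (ρ (e*a*e) + χ (e*a*(1-e)) + φb ((1-e)*a*(1-e))) * f = ρ (e*a*e) := by
    intro a
    obtain ⟨b1, h1⟩ := shR a; obtain ⟨b2, h2⟩ := shL a; obtain ⟨b3, h3⟩ := shD a
    rw [h1, h2, h3, mul_add, mul_add, add_mul, add_mul,
      cornerE1 hf1, cornerE2 hf1, cornerE3 hf1, add_zero, add_zero]
  have extL : ∀ a : A,
      f * (ρ (e*a*e) + χ (e*a*(1-e)) + φb ((1-e)*a*(1-e))) * (1-f) = χ (e*a*(1-e)) := by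
    intro a
    obtain ⟨b1, h1⟩ := shR a; obtain ⟨b2, h2⟩ := shL a; obtain ⟨b3, h3⟩ := shD a
    rw [h1, h2, h3, mul_add, mul_add, add_mul, add_mul,
      cornerL1 hf1, cornerL2 hf1, cornerL3 hf1, add_zero, zero_add]
  have extD : ∀ a : A,
      (1-f) * (ρ (e*a*e) + χ (e*a*(1-e)) + φb ((1-e)*a*(1-e))) * (1-f)
        = φb ((1-e)*a*(1-e)) := by
    intro a
    obtain ⟨b1, h1⟩ := shR a; obtain ⟨b2, h2⟩ := shL a; obtain ⟨b3, h3⟩ := shD a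
    rw [h1, h2, h3, mul_add, mul_add, add_mul, add_mul,
      cornerD1 hf1, cornerD2 hf1, cornerD3 hf1, zero_add, zero_add]
  -- φ0 properties
  have hinj : Function.Injective
      (fun a : A => ρ (e*a*e) + χ (e*a*(1-e)) + φb ((1-e)*a*(1-e))) := by
    intro a a' h
    replace h : ρ (e*a*e) + χ (e*a*(1-e)) + φb ((1-e)*a*(1-e)) =
        ρ (e*a'*e) + χ (e*a'*(1-e)) + φb ((1-e)*a'*(1-e)) := h
    have hR : ρ (e*a*e) = ρ (e*a'*e) := by rw [← extR a, ← extR a', h]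
    have hL : χ (e*a*(1-e)) = χ (e*a'*(1-e)) := by rw [← extL a, ← extL a', h]
    have hD : φb ((1-e)*a*(1-e)) = φb ((1-e)*a'*(1-e)) := by rw [← extD a, ← extD a', h]
    have h1 : e*a*e = e*a'*e := hρbij.2.1 ⟨a, rfl⟩ ⟨a', rfl⟩ hR
    have h2 : e*a*(1-e) = e*a'*(1-e) := hχbij.2.1 ⟨a, rfl⟩ ⟨a', rfl⟩ hL
    have h3 : (1-e)*a*(1-e) = (1-e)*a'*(1-e) := hφbbij.2.1 ⟨a, rfl⟩ ⟨a', rfl⟩ hD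
    calc a = e*a*e + e*a*(1-e) + (1-e)*a*(1-e) := (scPeirce he2 a).symm
      _ = e*a'*e + e*a'*(1-e) + (1-e)*a'*(1-e) := by rw [h1, h2, h3]
      _ = a' := scPeirce he2 a'
  have hsurj : Function.Surjective
      (fun a : A => ρ (e*a*e) + χ (e*a*(1-e)) + φb ((1-e)*a*(1-e))) := by
    intro b
    obtain ⟨r, ⟨ar, har⟩, hρr⟩ := hρbij.2.2 (⟨b, rfl⟩ : f*b*f ∈ {y : B | ∃ b', y = f*b'*f})
    obtain ⟨l, ⟨al, hal⟩, hχl'⟩ :=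
      hχbij.2.2 (⟨b, rfl⟩ : f*b*(1-f) ∈ {y : B | ∃ b', y = f*b'*(1-f)})
    obtain ⟨d, ⟨ad, had⟩, hφd⟩ :=
      hφbbij.2.2 (⟨b, rfl⟩ : (1-f)*b*(1-f) ∈ {y : B | ∃ b', y = (1-f)*b'*(1-f)})
    refine ⟨r + l + d, ?_⟩
    subst har hal had
    show ρ (e*(e*ar*e + e*al*(1-e) + (1-e)*ad*(1-e))*e) +
        χ (e*(e*ar*e + e*al*(1-e) + (1-e)*ad*(1-e))*(1-e)) +
        φb ((1-e)*(e*ar*e + e*al*(1-e) + (1-e)*ad*(1-e))*(1-e)) = b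
    have c1 : e*(e*ar*e + e*al*(1-e) + (1-e)*ad*(1-e))*e = e*ar*e := by
      rw [mul_add, mul_add, add_mul, add_mul,
        cornerE1 he1, cornerE2 he1, cornerE3 he1, add_zero, add_zero]
    have c2 : e*(e*ar*e + e*al*(1-e) + (1-e)*ad*(1-e))*(1-e) = e*al*(1-e) := by
      rw [mul_add, mul_add, add_mul, add_mul,
        cornerL1 he1, cornerL2 he1, cornerL3 he1, add_zero, zero_add]
    have c3 : (1-e)*(e*ar*e + e*al*(1-e) + (1-e)*ad*(1-e))*(1-e) = (1-e)*ad*(1-e) := by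
      rw [mul_add, mul_add, add_mul, add_mul,
        cornerD1 he1, cornerD2 he1, cornerD3 he1, zero_add, zero_add]
    rw [c1, c2, c3, hρr, hχl', hφd]
    exact scPeirce hf2 b
  have hzero :
      ρ (e*(0:A)*e) + χ (e*(0:A)*(1-e)) + φb ((1-e)*(0:A)*(1-e)) = 0 := by
    simp only [mul_zero, zero_mul]
    rw [hρ0, hχ0, hφb0]; simp
  have hone :
      ρ (e*(1:A)*e) + χ (e*(1:A)*(1-e)) + φb ((1-e)*(1:A)*(1-e)) = 1 := by
    rw [mul_one, mul_one, he1, idm1 he1, idm3 he1, hρone, hχ0, hφbone]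
    abel
  have hadd : ∀ a a' : A,
      ρ (e*(a+a')*e) + χ (e*(a+a')*(1-e)) + φb ((1-e)*(a+a')*(1-e)) =
        (ρ (e*a*e) + χ (e*a*(1-e)) + φb ((1-e)*a*(1-e))) +
        (ρ (e*a'*e) + χ (e*a'*(1-e)) + φb ((1-e)*a'*(1-e))) := by
    intro a a'
    have c1 : e*(a+a')*e = e*a*e + e*a'*e := by noncomm_ring
    have c2 : e*(a+a')*(1-e) = e*a*(1-e) + e*a'*(1-e) := by noncomm_ring
    have c3 : (1-e)*(a+a')*(1-e) = (1-e)*a*(1-e) + (1-e)*a'*(1-e) := by noncomm_ring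
    rw [c1, c2, c3, hρadd _ _ ⟨a, rfl⟩ ⟨a', rfl⟩, hχadd _ _ ⟨a, rfl⟩ ⟨a', rfl⟩,
      hφbadd _ _ ⟨a, rfl⟩ ⟨a', rfl⟩]
    abel
  have hmul : ∀ a a' : A,
      ρ (e*(a*a')*e) + χ (e*(a*a')*(1-e)) + φb ((1-e)*(a*a')*(1-e)) =
        (ρ (e*a*e) + χ (e*a*(1-e)) + φb ((1-e)*a*(1-e))) *
        (ρ (e*a'*e) + χ (e*a'*(1-e)) + φb ((1-e)*a'*(1-e))) := by
    intro a a'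
    obtain ⟨b1, h1⟩ := shR a; obtain ⟨b2, h2⟩ := shL a; obtain ⟨b3, h3⟩ := shD a
    obtain ⟨b4, h4⟩ := shR a'; obtain ⟨b5, h5⟩ := shL a'; obtain ⟨b6, h6⟩ := shD a'
    have memX : ∃ x, (e*a*e)*(e*a'*(1-e)) = e*x*(1-e) :=
      ⟨(a*e)*(e*a'), by noncomm_ring⟩
    have memY : ∃ x, (e*a*(1-e))*((1-e)*a'*(1-e)) = e*x*(1-e) :=
      ⟨(a*(1-e))*((1-e)*a'), by noncomm_ring⟩
    rw [← prodR he1 he2 a a', ← prodD he1 he2 a a', ← prodL he1 a a',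
      hρmul _ _ ⟨a, rfl⟩ ⟨a', rfl⟩, hχadd _ _ memX memY,
      hχl _ _ ⟨a, rfl⟩ ⟨a', rfl⟩, hχr _ _ ⟨a, rfl⟩ ⟨a', rfl⟩,
      hφbmul _ _ ⟨a, rfl⟩ ⟨a', rfl⟩]
    rw [h1, h2, h3, h4, h5, h6]
    have expand : (f*b1*f + f*b2*(1-f) + (1-f)*b3*(1-f)) *
        (f*b4*f + f*b5*(1-f) + (1-f)*b6*(1-f)) =
        (f*b1*f)*(f*b4*f) + ((f*b1*f)*(f*b5*(1-f)) + (f*b2*(1-f))*((1-f)*b6*(1-f)))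
          + ((1-f)*b3*(1-f))*((1-f)*b6*(1-f))
          + ((f*b1*f)*((1-f)*b6*(1-f)) + (f*b2*(1-f))*(f*b4*f) + (f*b2*(1-f))*(f*b5*(1-f))
            + ((1-f)*b3*(1-f))*(f*b4*f) + ((1-f)*b3*(1-f))*(f*b5*(1-f))) := by
      noncomm_ring
    rw [expand, cross_z2 hf1, cross_z1 hf1, cross_z1 hf1, cross_z1 hf1, cross_z1 hf1]
    abel
  -- m facts
  have hmm : m*m = 0 := by rw [hmeq]; exact cross_z1 hf1 f b₀ b₀ (1-f)
  have hfm : f*m = m := by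
    rw [hmeq, show f*(f*b₀*(1-f)) = (f*f)*b₀*(1-f) from by noncomm_ring, hf1]
  have hu1 : (1-m)*(1+m) = 1 := by
    have h : (1-m)*(1+m) = 1 - m*m := by noncomm_ring
    rw [h, hmm, sub_zero]
  have hu2 : (1+m)*(1-m) = 1 := by
    have h : (1+m)*(1-m) = 1 - m*m := by noncomm_ring
    rw [h, hmm, sub_zero]
  -- conjugation bijective
  have hconj : Function.Bijective (fun y : B => (1-m)*y*(1+m)) := by
    have cancel1 : ∀ y : B, (1+m)*((1-m)*y*(1+m))*(1-m) = y := by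
      intro y
      have h : (1+m)*((1-m)*y*(1+m))*(1-m) = ((1+m)*(1-m))*y*((1+m)*(1-m)) := by
        noncomm_ring
      rw [h, hu2, one_mul, mul_one]
    have cancel2 : ∀ y : B, (1-m)*((1+m)*y*(1-m))*(1+m) = y := by
      intro y
      have h : (1-m)*((1+m)*y*(1-m))*(1+m) = ((1-m)*(1+m))*y*((1-m)*(1+m)) := by
        noncomm_ring
      rw [h, hu1, one_mul, mul_one]
    constructor
    · intro y y' h
      simp only at h
      have := congrArg (fun z => (1+m)*z*(1-m)) h
      simpa [cancel1] using this
    · intro y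
      exact ⟨(1+m)*y*(1-m), cancel2 y⟩
  have hmain : ∀ a : A,
      (1-m) * (ρ (e*a*e) + χ (e*a*(1-e)) + φb ((1-e)*a*(1-e))) * (1+m) =
      ρ (e*a*e) + ρ (e*a*e) * m + χ (e*a*(1-e)) - m * φb ((1-e)*a*(1-e)) +
        φb ((1-e)*a*(1-e)) := by
    intro a
    obtain ⟨b1, h1⟩ := shR a; obtain ⟨b2, h2⟩ := shL a; obtain ⟨b3, h3⟩ := shD a
    have zlm : χ (e*a*(1-e)) * m = 0 := by
      rw [h2, hmeq]; exact cross_z1 hf1 f b2 b₀ (1-f)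
    have zdm : φb ((1-e)*a*(1-e)) * m = 0 := by
      rw [h3, hmeq]; exact cross_z1 hf1 (1-f) b3 b₀ (1-f)
    have zmr : m * ρ (e*a*e) = 0 := by
      rw [hmeq, h1]; exact cross_z1 hf1 f b₀ b1 f
    have zml : m * χ (e*a*(1-e)) = 0 := by
      rw [hmeq, h2]; exact cross_z1 hf1 f b₀ b2 (1-f)
    have key : (1-m) * (ρ (e*a*e) + χ (e*a*(1-e)) + φb ((1-e)*a*(1-e))) * (1+m) =
        ρ (e*a*e) + χ (e*a*(1-e)) + φb ((1-e)*a*(1-e)) + ρ (e*a*e) * m +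
        χ (e*a*(1-e)) * m + φb ((1-e)*a*(1-e)) * m - m * ρ (e*a*e) - m * χ (e*a*(1-e)) -
        m * φb ((1-e)*a*(1-e)) - (m * ρ (e*a*e)) * m - m * (χ (e*a*(1-e)) * m) -
        m * (φb ((1-e)*a*(1-e)) * m) := by noncomm_ring
    rw [key, zlm, zdm, zmr, zml]
    simp only [zero_mul, mul_zero, add_zero, sub_zero, zero_add]
    abel
  -- the ring hom
  refine ⟨RingEquiv.ofBijective
    ({ toFun := fun a : A =>
        (1-m) * (ρ (e*a*e) + χ (e*a*(1-e)) + φb ((1-e)*a*(1-e))) * (1+m),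
       map_one' := by
         show (1-m) * (ρ (e*(1:A)*e) + χ (e*(1:A)*(1-e)) + φb ((1-e)*(1:A)*(1-e))) * (1+m) = 1
         rw [hone, mul_one, hu1],
       map_mul' := by
         intro a a'
         show (1-m) * (ρ (e*(a*a')*e) + χ (e*(a*a')*(1-e)) + φb ((1-e)*(a*a')*(1-e))) * (1+m) =
           ((1-m) * (ρ (e*a*e) + χ (e*a*(1-e)) + φb ((1-e)*a*(1-e))) * (1+m)) *
           ((1-m) * (ρ (e*a'*e) + χ (e*a'*(1-e)) + φb ((1-e)*a'*(1-e))) * (1+m))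
         rw [hmul a a']
         have h : ((1-m) * (ρ (e*a*e) + χ (e*a*(1-e)) + φb ((1-e)*a*(1-e))) * (1+m)) *
             ((1-m) * (ρ (e*a'*e) + χ (e*a'*(1-e)) + φb ((1-e)*a'*(1-e))) * (1+m)) =
             (1-m) * ((ρ (e*a*e) + χ (e*a*(1-e)) + φb ((1-e)*a*(1-e))) *
               (((1+m)*(1-m)) * (ρ (e*a'*e) + χ (e*a'*(1-e)) + φb ((1-e)*a'*(1-e))))) *
               (1+m) := by noncomm_ring
         rw [h, hu2, one_mul, mul_assoc],
       map_zero' := by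
         show (1-m) * (ρ (e*(0:A)*e) + χ (e*(0:A)*(1-e)) + φb ((1-e)*(0:A)*(1-e))) * (1+m) = 0
         rw [hzero, mul_zero, zero_mul],
       map_add' := by
         intro a a'
         show (1-m) * (ρ (e*(a+a')*e) + χ (e*(a+a')*(1-e)) + φb ((1-e)*(a+a')*(1-e))) * (1+m) =
           ((1-m) * (ρ (e*a*e) + χ (e*a*(1-e)) + φb ((1-e)*a*(1-e))) * (1+m)) +
           ((1-m) * (ρ (e*a'*e) + χ (e*a'*(1-e)) + φb ((1-e)*a'*(1-e))) * (1+m))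
         rw [hadd a a']
         noncomm_ring } : A →+* B)
    (hconj.comp ⟨hinj, hsurj⟩), ?_, ?_⟩
  · intro a
    rw [RingEquiv.ofBijective_apply]
    exact hmain a
  · rw [RingEquiv.ofBijective_apply]
    show (1-m) * (ρ (e*e*e) + χ (e*e*(1-e)) + φb ((1-e)*e*(1-e))) * (1+m) = f + m
    rw [hmain e]
    have c1 : e*e*e = e := by rw [he1, he1]
    have c2 : e*e*(1-e) = 0 := by rw [he1, idm1 he1]
    have c3 : (1-e)*e*(1-e) = 0 := by rw [idm2 he1, zero_mul]
    rw [c1, c2, c3, hρone, hχ0, hφb0, mul_zero, sub_zero, add_zero, hfm]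
    abel
end

section
/- Let A be a ring with pairwise orthogonal idempotents e₁,…,e_m summing to 1 such that e_j A e_i = 0 for all j > i, and suppose each corner ring e_i A e_i is semicentral reduced with e_{i+1} A e_{i+1} ≠ 0. If additionally e_i A e_{i+1} ≠ 0 for all i = 1,…,m-1, then for any permutation σ ≠ id of {1,…,m}, the reordered sequence e_{σ(1)},…,e_{σ(m)} does not satisfy the triangularity condition e_{σ(j)} A e_{σ(i)} = 0 for all j > i. -/
theorem stmt_14 {A : Type*} [Ring A] {m : ℕ} (e : Fin m → A)
    (hidem : ∀ i, e i * e i = e i)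
    (horth : ∀ i j, i ≠ j → e i * e j = 0)
    (hsum : ∑ i, e i = 1)
    (htri : ∀ i j : Fin m, i < j → ∀ a : A, e j * a * e i = 0)
    (hred : ∀ i, CornerSemicentralReduced (e i))
    (hcons : ∀ i j : Fin m, (j : ℕ) = (i : ℕ) + 1 → ∃ a : A, e i * a * e j ≠ 0) :
    ∀ σ : Equiv.Perm (Fin m), σ ≠ 1 →
      ¬ (∀ i j : Fin m, i < j → ∀ a : A, e (σ j) * a * e (σ i) = 0) := by
  intro σ hσ htri'
  apply hσ
  have key : ∀ k l : Fin m, (l : ℕ) = (k : ℕ) + 1 → σ⁻¹ k < σ⁻¹ l := by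
    intro k l hkl
    obtain ⟨a, ha⟩ := hcons k l hkl
    rcases lt_trichotomy (σ⁻¹ k) (σ⁻¹ l) with h | h | h
    · exact h
    · exact absurd (congrArg Fin.val (σ⁻¹.injective h)) (by omega)
    · have h0 := htri' _ _ h a
      simp only [Equiv.Perm.coe_inv, Equiv.apply_symm_apply] at h0
      exact absurd h0 ha
  have hmono : StrictMono (fun i => σ⁻¹ i) := by
    cases m with
    | zero => intro i; exact i.elim0
    | succ n =>
      rw [Fin.strictMono_iff_lt_succ]
      intro i
      exact key _ _ (by simp)
  have hid : (fun i => σ⁻¹ i) = id := by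
    haveI : WellFoundedLT (Fin m) := inferInstance
    refine (StrictMono.range_inj (β := Fin m) (γ := Fin m) hmono strictMono_id).1 ?_
    rw [Set.range_id, Set.range_eq_univ]
    exact σ⁻¹.surjective
  have hinv : ∀ i, σ⁻¹ i = i := fun i => congrFun hid i
  ext i
  have h2 := hinv (σ i)
  simp only [Equiv.Perm.coe_inv, Equiv.symm_apply_apply] at h2
  simp [← h2]
end

section
/- Let B be a ring with a strongly upper triangular decomposition with respect to pairwise orthogonal idempotents f₁,…,f_n (sum 1, f_q B f_p = 0 for q > p, each f_p B f_p semicentral reduced). If f is a nonzero semicentral reduced idempotent of B, then there exists j ∈ {1,…,n} and an element m ∈ f_j B (f_{j+1}+⋯+f_n) such that f = f_j + m, and moreover f_k B f_j = 0 for all k < j. -/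
theorem stmt_17 {B : Type*} [Ring B] {n : ℕ} (f : Fin n → B)
    (hidem : ∀ i, f i * f i = f i)
    (horth : ∀ i j, i ≠ j → f i * f j = 0)
    (hsum : ∑ i, f i = 1)
    (htri : ∀ p q : Fin n, p < q → ∀ b : B, f q * b * f p = 0)
    (hred : ∀ p, CornerSemicentralReduced (f p))
    (x : B) (hx : IsSemicentral x) (hxred : CornerSemicentralReduced x) (hx0 : x ≠ 0) :
    ∃ j : Fin n, ∃ m : B,
      (∃ b : B, m = f j * b * (∑ k ∈ Finset.Ioi j, f k)) ∧
      x = f j + m ∧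
      ∀ k : Fin n, k < j → ∀ b : B, f k * b * f j = 0 := by
  classical
  obtain ⟨hxx, hsc⟩ := hx
  have hsc' : ∀ a : B, x * a * x = a * x := by
    intro a
    have h := hsc a
    rw [sub_mul, sub_mul, one_mul] at h
    exact (sub_eq_zero.mp h).symm
  -- f p * x is idempotent
  have hfxi : ∀ p, (f p * x) * (f p * x) = f p * x := by
    intro p
    calc (f p * x) * (f p * x) = f p * (x * f p * x) := by noncomm_ring
      _ = f p * (f p * x) := by rw [hsc']
      _ = f p * x := by rw [← mul_assoc, hidem]
  -- some p has f p * x ≠ 0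
  have hT : ∃ p, f p * x ≠ 0 := by
    by_contra h
    push_neg at h
    apply hx0
    calc x = 1 * x := (one_mul x).symm
      _ = (∑ i, f i) * x := by rw [hsum]
      _ = ∑ i, f i * x := by rw [Finset.sum_mul]
      _ = 0 := Finset.sum_eq_zero fun i _ => h i
  set T : Finset (Fin n) := Finset.univ.filter (fun p => f p * x ≠ 0) with hTdef
  have hTne : T.Nonempty := by
    obtain ⟨p, hp⟩ := hT
    exact ⟨p, by simp [hTdef, hp]⟩
  set j := T.min' hTne with hjdef
  have hjT : f j * x ≠ 0 := by
    have := T.min'_mem hTne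
    simp only [hTdef, Finset.mem_filter] at this
    exact this.2
  have hmin : ∀ k, k < j → f k * x = 0 := by
    intro k hk
    by_contra hkx
    have : j ≤ k := T.min'_le k (by simp [hTdef, hkx])
    exact absurd hk (not_lt.mpr this)
  -- key : f j * x = x
  have hcond2 : x * (f j * x) * x = f j * x := by
    calc x * (f j * x) * x = (x * f j * x) * x := by noncomm_ring
      _ = (f j * x) * x := by rw [hsc']
      _ = f j * x := by rw [mul_assoc, hxx]
  have hcond3 : ∀ b : B, (x - f j * x) * (x * b * x) * (f j * x) = 0 := by
    intro b
    have key : ∀ p, p ≠ j → f p * (b * f j * x) = 0 := by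
      intro p hp
      rcases lt_or_gt_of_ne hp with hlt | hgt
      · calc f p * (b * f j * x) = f p * (x * (b * f j) * x) := by rw [hsc']
          _ = (f p * x) * ((b * f j) * x) := by noncomm_ring
          _ = 0 := by rw [hmin p hlt, zero_mul]
      · calc f p * (b * f j * x) = (f p * b * f j) * x := by noncomm_ring
          _ = 0 := by rw [htri j p hgt b, zero_mul]
    have hb : b * f j * x = f j * (b * f j * x) := by
      calc b * f j * x = 1 * (b * f j * x) := by rw [one_mul]
        _ = (∑ i, f i) * (b * f j * x) := by rw [hsum]
        _ = ∑ i, f i * (b * f j * x) := by rw [Finset.sum_mul]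
        _ = f j * (b * f j * x) := by
            refine Finset.sum_eq_single j (fun p _ hp => key p hp) (by simp)
    have hA : x * (x * b * x) * (f j * x) = b * f j * x := by
      calc x * (x * b * x) * (f j * x) = (x * x) * b * (x * f j * x) := by noncomm_ring
        _ = x * b * (f j * x) := by rw [hsc', hxx]
        _ = x * (b * f j) * x := by noncomm_ring
        _ = (b * f j) * x := hsc' _
    have hB : (f j * x) * (x * b * x) * (f j * x) = f j * (b * f j * x) := by
      calc (f j * x) * (x * b * x) * (f j * x)
          = f j * (x * (x * b * x) * (f j * x)) := by noncomm_ring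
        _ = f j * (b * f j * x) := by rw [hA]
    calc (x - f j * x) * (x * b * x) * (f j * x)
        = x * (x * b * x) * (f j * x) - (f j * x) * (x * b * x) * (f j * x) := by
          noncomm_ring
      _ = b * f j * x - f j * (b * f j * x) := by rw [hA, hB]
      _ = 0 := by rw [← hb, sub_self]
  have hy : f j * x = x := by
    rcases hxred (f j * x) (hfxi j) hcond2 hcond3 with h0 | h1
    · exact absurd h0 hjT
    · exact h1
  -- f j * x * f j = f j
  have hejidem : (f j * x * f j) * (f j * x * f j) = f j * x * f j := by
    calc (f j * x * f j) * (f j * x * f j)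
        = f j * x * (f j * f j) * (x * f j) := by noncomm_ring
      _ = f j * x * f j * (x * f j) := by rw [hidem]
      _ = f j * (x * f j * x) * f j := by noncomm_ring
      _ = f j * (f j * x) * f j := by rw [hsc']
      _ = (f j * f j) * x * f j := by noncomm_ring
      _ = f j * x * f j := by rw [hidem]
  have hejc2 : f j * (f j * x * f j) * f j = f j * x * f j := by
    calc f j * (f j * x * f j) * f j = (f j * f j) * x * (f j * f j) := by noncomm_ring
      _ = f j * x * f j := by rw [hidem]
  have hejc3 : ∀ b : B,
      (f j - f j * x * f j) * (f j * b * f j) * (f j * x * f j) = 0 := by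
    intro b
    have h1 : f j * (f j * b * f j) * (f j * x * f j) = f j * b * f j * x * f j := by
      calc f j * (f j * b * f j) * (f j * x * f j)
          = (f j * f j) * b * (f j * f j) * (x * f j) := by noncomm_ring
        _ = f j * b * (f j * f j) * (x * f j) := by rw [hidem]
        _ = f j * b * f j * (x * f j) := by rw [hidem]
        _ = f j * b * f j * x * f j := by noncomm_ring
    have h2 : (f j * x * f j) * (f j * b * f j) * (f j * x * f j)
        = f j * b * f j * x * f j := by
      calc (f j * x * f j) * (f j * b * f j) * (f j * x * f j)
          = f j * (x * ((f j * f j) * b * (f j * f j)) * x) * f j := by noncomm_ring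
        _ = f j * (x * (f j * b * (f j * f j)) * x) * f j := by rw [hidem]
        _ = f j * (x * (f j * b * f j) * x) * f j := by rw [hidem]
        _ = f j * ((f j * b * f j) * x) * f j := by rw [hsc']
        _ = f j * b * f j * x * f j := by
            rw [show f j * ((f j * b * f j) * x) * f j = (f j * f j) * b * f j * x * f j by
              noncomm_ring, hidem]
    calc (f j - f j * x * f j) * (f j * b * f j) * (f j * x * f j)
        = f j * (f j * b * f j) * (f j * x * f j)
          - (f j * x * f j) * (f j * b * f j) * (f j * x * f j) := by noncomm_ring
      _ = 0 := by rw [h1, h2, sub_self]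
  have hej : f j * x * f j = f j := by
    rcases hred j (f j * x * f j) hejidem hejc2 hejc3 with h0 | h1
    · exfalso
      apply hjT
      calc f j * x = (f j * x) * (f j * x) := (hfxi j).symm
        _ = (f j * x * f j) * x := by noncomm_ring
        _ = 0 := by rw [h0, zero_mul]
    · exact h1
  -- the decomposition
  set m : B := f j * x * (∑ k ∈ Finset.Ioi j, f k) with hmdef
  have hxeq : x = f j + m := by
    have hsplit : x = ∑ q, f j * x * f q := by
      calc x = f j * x := hy.symm
        _ = f j * x * 1 := (mul_one _).symm
        _ = f j * x * ∑ q, f q := by rw [hsum]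
        _ = ∑ q, f j * x * f q := by rw [Finset.mul_sum]
    have herase : ∑ q ∈ Finset.univ.erase j, f j * x * f q
        = ∑ q ∈ Finset.Ioi j, f j * x * f q := by
      refine (Finset.sum_subset ?_ ?_).symm
      · intro q hq
        simp only [Finset.mem_Ioi] at hq
        simp [Finset.mem_erase, ne_of_gt hq]
      · intro q hq hq'
        simp only [Finset.mem_erase, Finset.mem_univ, and_true] at hq
        simp only [Finset.mem_Ioi, not_lt] at hq'
        exact htri q j (lt_of_le_of_ne hq' hq) x
    calc x = ∑ q, f j * x * f q := hsplit
      _ = f j * x * f j + ∑ q ∈ Finset.univ.erase j, f j * x * f q :=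
          (Finset.add_sum_erase _ _ (Finset.mem_univ j)).symm
      _ = f j + ∑ q ∈ Finset.Ioi j, f j * x * f q := by rw [hej, herase]
      _ = f j + m := by rw [hmdef, Finset.mul_sum]
  refine ⟨j, m, ⟨x, rfl⟩, hxeq, ?_⟩
  intro k hk b
  have hfj : f j = x - m := by rw [hxeq, add_sub_cancel_right]
  have hkx : f k * x = 0 := hmin k hk
  have h1 : f k * (b * x) = 0 := by
    calc f k * (b * x) = f k * (x * b * x) := by rw [hsc']
      _ = (f k * x) * (b * x) := by noncomm_ring
      _ = 0 := by rw [hkx, zero_mul]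
  have h2 : f k * (b * m) = 0 := by
    have h3 : f k * ((b * f j) * x) = 0 := by
      calc f k * ((b * f j) * x) = f k * (x * (b * f j) * x) := by rw [hsc']
        _ = (f k * x) * ((b * f j) * x) := by noncomm_ring
        _ = 0 := by rw [hkx, zero_mul]
    calc f k * (b * m) = (f k * ((b * f j) * x)) * (∑ q ∈ Finset.Ioi j, f q) := by
          rw [hmdef]; noncomm_ring
      _ = 0 := by rw [h3, zero_mul]
  calc f k * b * f j = f k * (b * x) - f k * (b * m) := by rw [hfj]; noncomm_ring
    _ = 0 := by rw [h1, h2, sub_self]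
end

section
/- Let e be a semicentral idempotent in a ring A and let g ∈ A be a semicentral reduced idempotent with α := e*g*e ≠ 0. Then g = α + e*g*(1-e) (the (1-e)-corner component of g vanishes) and α is a semicentral reduced idempotent of the corner ring eAe. -/
theorem stmt_18 {A : Type*} [Ring A] (e g : A)
    (he : IsSemicentral e) (hg : IsSemicentral g) (hgred : CornerSemicentralReduced g) :
    ∀ α : A, α = e * g * e → α ≠ 0 →
      g = α + e * g * (1 - e) ∧
      α * α = α ∧ e * α * e = α ∧
      (∀ a : A, (e - α) * (e * a * e) * α = 0) ∧
      CornerSemicentralReduced α := by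
  obtain ⟨he1, he2⟩ := he
  obtain ⟨hg1, hg2⟩ := hg
  have hE : ∀ a : A, e * (a * e) = a * e := by
    intro a
    have h := he2 a
    rw [sub_mul, sub_mul, one_mul, sub_eq_zero] at h
    rw [← mul_assoc]
    exact h.symm
  have hG : ∀ a : A, g * (a * g) = a * g := by
    intro a
    have h := hg2 a
    rw [sub_mul, sub_mul, one_mul, sub_eq_zero] at h
    rw [← mul_assoc]
    exact h.symm
  intro α hα hα0
  -- Step 1: e * g = g
  have heg : e * g = g := by
    have c1 : (e * g) * (e * g) = e * g := by
      rw [mul_assoc, hG e, ← mul_assoc, he1]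
    have c2 : g * (e * g) * g = e * g := by
      rw [mul_assoc, mul_assoc, hg1, hG e]
    have c3 : ∀ b : A, (g - e * g) * (g * b * g) * (e * g) = 0 := by
      intro b
      have h1 : g * (g * b * g) = g * b * g := by
        rw [← mul_assoc, ← mul_assoc, hg1]
      have h2 : (g * b * g) * (e * g) = g * b * e * g := by
        rw [mul_assoc (g * b) g (e * g), hG e, ← mul_assoc]
      have h3 : e * (g * b * e * g) = g * b * e * g := by
        rw [← mul_assoc, hE (g * b)]
      rw [sub_mul, sub_mul, h1, h2, mul_assoc e g (g * b * g), h1,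
        mul_assoc e (g * b * g) (e * g), h2, h3, sub_self]
    rcases hgred (e * g) c1 c2 c3 with h | h
    · exact absurd (by rw [hα, h, zero_mul]) hα0
    · exact h
  have hα' : α = g * e := by rw [hα, heg]
  have hαα : α * α = α := by
    rw [hα', mul_assoc, hE g, ← mul_assoc, hg1]
  have hαe : α * e = α := by rw [hα', mul_assoc, he1]
  have heα : e * α = α := by rw [hα', hE g]
  have hgα : g * α = α := by rw [hα', ← mul_assoc, hg1]
  have hαg : α * g = g := by rw [hα', mul_assoc, heg, hg1]
  refine ⟨?_, hαα, ?_, ?_, ?_⟩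
  · -- g = α + e*g*(1-e)
    rw [heg, hα', mul_sub, mul_one]
    abel
  · -- e*α*e = α
    rw [mul_assoc, hαe, heα]
  · -- ∀ a, (e - α)*(e*a*e)*α = 0
    intro a
    have key := hg2 (e * a * e)
    have expand : (e - α) * (e * a * e) * α = ((1 - g) * (e * (e * a * e)) * g) * e := by
      rw [hα']; noncomm_ring
    have habs : e * (e * a * e) = e * a * e := by
      rw [← mul_assoc, ← mul_assoc, he1]
    rw [expand, habs, key, zero_mul]
  · -- CornerSemicentralReduced α
    intro x hx1 hx2 hx3
    -- absorption facts for x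
    have hax : α * x = x := by
      conv_lhs => rw [← hx2]
      rw [← mul_assoc, ← mul_assoc, hαα, hx2]
    have hxa : x * α = x := by
      conv_lhs => rw [← hx2]
      rw [mul_assoc, mul_assoc, hαα, ← mul_assoc, hx2]
    have hgx : g * x = x := by
      conv_lhs => rw [← hx2]
      rw [← mul_assoc, ← mul_assoc, hgα, hx2]
    -- key absorption : e * (c * α) = c * α
    have lem1 : ∀ c : A, e * (c * α) = c * α := by
      intro c
      rw [hα', ← mul_assoc c g e]
      exact hE (c * g)
    have lem2 : ∀ c : A, α * (c * α) = g * (c * α) := by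
      intro c
      nth_rewrite 1 [hα']
      rw [mul_assoc, lem1]
    -- (g*b*g)*x = α*b*α*x
    have hwx : ∀ b : A, (g * b * g) * x = α * b * α * x := by
      intro b
      calc (g * b * g) * x = (g * b) * (g * x) := by rw [mul_assoc]
        _ = g * (b * x) := by rw [hgx, mul_assoc]
        _ = g * (b * (α * x)) := by rw [hax]
        _ = (g * (b * α)) * x := by rw [← mul_assoc b α x, ← mul_assoc]
        _ = (α * (b * α)) * x := by rw [lem2]
        _ = α * b * α * x := by rw [← mul_assoc]
    have d1 : (x * g) * (x * g) = x * g := by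
      rw [mul_assoc x g (x * g), ← mul_assoc g x g, hgx, ← mul_assoc, hx1]
    have d2 : g * (x * g) * g = x * g := by
      rw [← mul_assoc g x g, hgx, mul_assoc, hg1]
    have d3 : ∀ b : A, (g - x * g) * (g * b * g) * (x * g) = 0 := by
      intro b
      have h1 : g * (g * b * g) = g * b * g := by
        rw [← mul_assoc, ← mul_assoc, hg1]
      have key : x * (α * b * α) * x = α * b * α * x := by
        have h3 := hx3 b
        rw [sub_mul, sub_mul, ← mul_assoc, ← mul_assoc, hαα, sub_eq_zero] at h3
        exact h3.symm
      calc (g - x * g) * (g * b * g) * (x * g)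
          = ((g * b * g) * x - x * ((g * b * g) * x)) * g := by
            rw [sub_mul, sub_mul, h1, mul_assoc x g (g * b * g), h1]
            noncomm_ring
        _ = 0 := by rw [hwx, ← mul_assoc x (α * b * α) x, key, sub_self, zero_mul]
    rcases hgred (x * g) d1 d2 d3 with h | h
    · left
      rw [← hxa, hα', ← mul_assoc, h, zero_mul]
    · right
      rw [← hxa, hα', ← mul_assoc, h]
end

section
/- Let e, f₁ be idempotents in a ring B where f₁ is semicentral and f₁Bf₁ is semicentral reduced, and let f be a semicentral idempotent of B (not necessarily reduced). If f₁*f*f₁ ≠ 0, then f₁*f*f₁ = f₁; consequently every nonzero semicentral idempotent f of B either satisfies f₁*f*f₁ = f₁ or f₁*f*f₁ = 0. -/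
theorem stmt_19 {B : Type*} [Ring B] (f₁ f : B)
    (hf₁ : IsSemicentral f₁) (hS₁ : CornerSemicentralReduced f₁)
    (hf : IsSemicentral f) :
    (f₁ * f * f₁ ≠ 0 → f₁ * f * f₁ = f₁) ∧
    (f ≠ 0 → f₁ * f * f₁ = f₁ ∨ f₁ * f * f₁ = 0) := by
  have h1 : f * f₁ = f₁ * f * f₁ := by
    have h := hf₁.2 f
    have e : (1 - f₁) * f * f₁ = f * f₁ - f₁ * f * f₁ := by noncomm_ring
    rw [e] at h
    exact sub_eq_zero.mp h
  have hxx : (f₁ * f * f₁) * (f₁ * f * f₁) = f₁ * f * f₁ := by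
    rw [← h1]
    have e : f * f₁ * (f * f₁) = f * (f₁ * f * f₁) := by noncomm_ring
    rw [e, ← h1, ← mul_assoc, hf.1]
  have hcorner : f₁ * (f₁ * f * f₁) * f₁ = f₁ * f * f₁ := by
    rw [show f₁ * (f₁ * f * f₁) * f₁ = (f₁ * f₁) * f * (f₁ * f₁) by noncomm_ring, hf₁.1]
  have hthird : ∀ b : B, (f₁ - f₁ * f * f₁) * (f₁ * b * f₁) * (f₁ * f * f₁) = 0 := by
    intro b
    rw [← h1]
    have h2 := hf.2 (f₁ * b * f₁)
    have e : (f₁ - f * f₁) * (f₁ * b * f₁) * (f * f₁)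
        = ((1 - f) * ((f₁ * f₁) * b * f₁) * f) * f₁ := by noncomm_ring
    rw [e, hf₁.1, h2, zero_mul]
  have hmain := hS₁ (f₁ * f * f₁) hxx hcorner hthird
  constructor
  · intro hne
    tauto
  · intro _
    tauto
end
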